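/- Suppose the set of saddle points of the Lagrangian L is nonempty and the infinite sequences generated by the inexact augmented Lagrangian method are well-defined. Then the dual sequence {p^k} = {(lambda^k, mu^k)} and the auxiliary sequence {w^k} are bounded. -/

import Mathlib

open scoped RealInnerProductSpace
open Filter

noncomputable section

/-- `Evec m` is `ℝ^m` with the Euclidean norm. -/
abbrev Evec (m : ℕ) := EuclideanSpace ℝ (Fin m)

/-- View a plain function `Fin m → ℝ` as a Euclidean vector. -/
def toE {m : ℕ} (v : Fin m → ℝ) : Evec m := WithLp.toLp 2 v

/-- The dual space `ℝ^{m1} × ℝ^{m2}` with the Euclidean (ℓ²) product norm. -/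
abbrev DualPair (m1 m2 : ℕ) := WithLp 2 (Evec m1 × Evec m2)

def mkDual {m1 m2 : ℕ} (lam : Evec m1) (mu : Evec m2) : DualPair m1 m2 := WithLp.toLp 2 (lam, mu)

/-- The primal-dual space `X × ℝ^{m1+m2}` with the Euclidean (ℓ²) product norm. -/
abbrev Triple (X : Type*) [NormedAddCommGroup X] (m1 m2 : ℕ) :=
  WithLp 2 (X × DualPair m1 m2)

def asT {X : Type*} [NormedAddCommGroup X] {m1 m2 : ℕ}
    (q : X × DualPair m1 m2) : Triple X m1 m2 := WithLp.toLp 2 q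

variable {X : Type*} [NormedAddCommGroup X] [InnerProductSpace ℝ X] [FiniteDimensional ℝ X]
variable {m1 m2 : ℕ}

/-- The Lagrangian `L(x, λ, μ) = f(x) + ⟨λ, h(x)⟩ + ⟨μ, g(x)⟩`. -/
def Lag (f : X → ℝ) (h : X → Evec m1) (g : X → Evec m2)
    (x : X) (lam : Evec m1) (mu : Evec m2) : ℝ :=
  f x + ⟪lam, h x⟫ + ⟪mu, g x⟫

/-- `(y, u, v) ∈ ∂L(x, λ, μ)`: the saddle subdifferential of the Lagrangian (for `μ ≥ 0`). -/
def saddleSubdiff (f : X → ℝ) (h : X → Evec m1) (g : X → Evec m2)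
    (x : X) (lam : Evec m1) (mu : Evec m2) (y : X) (u : Evec m1) (v : Evec m2) : Prop :=
  (∀ x' : X, Lag f h g x lam mu + ⟪y, x' - x⟫ ≤ Lag f h g x' lam mu) ∧
  (∀ (lam' : Evec m1) (mu' : Evec m2), (∀ i, 0 ≤ mu' i) →
    Lag f h g x lam' mu' ≤ Lag f h g x lam mu - ⟪u, lam' - lam⟫ - ⟪v, mu' - mu⟫)

/-- The set of saddle points of the Lagrangian: points `(x, (λ, μ))` with `μ ≥ 0`
and `(0,0,0) ∈ ∂L(x, λ, μ)`. -/
def SaddlePoints (f : X → ℝ) (h : X → Evec m1) (g : X → Evec m2) :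
    Set (X × DualPair m1 m2) :=
  {s | ∃ (x : X) (lam : Evec m1) (mu : Evec m2), s = (x, mkDual lam mu) ∧
    (∀ i, 0 ≤ mu i) ∧ saddleSubdiff f h g x lam mu 0 0 0}

/-- `X*`: the solution set of the primal problem (P). -/
def PrimalOpt (f : X → ℝ) (h : X → Evec m1) (g : X → Evec m2) : Set X :=
  {x | h x = 0 ∧ (∀ i, g x i ≤ 0) ∧
    ∀ x' : X, h x' = 0 → (∀ i, g x' i ≤ 0) → f x ≤ f x'}

/-- The dual objective function `d(λ, μ) = inf_x L(x, λ, μ)`, valued in `EReal`. -/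
def dualFun (f : X → ℝ) (h : X → Evec m1) (g : X → Evec m2)
    (lam : Evec m1) (mu : Evec m2) : EReal :=
  ⨅ x : X, ((Lag f h g x lam mu : ℝ) : EReal)

/-- `P*`: the solution set of the dual problem (D). -/
def DualOpt (f : X → ℝ) (h : X → Evec m1) (g : X → Evec m2) : Set (DualPair m1 m2) :=
  {p | ∃ (lam : Evec m1) (mu : Evec m2), p = mkDual lam mu ∧ (∀ i, 0 ≤ mu i) ∧
    ∀ (lam' : Evec m1) (mu' : Evec m2), (∀ i, 0 ≤ mu' i) →
      dualFun f h g lam' mu' ≤ dualFun f h g lam mu}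

/-- The augmented Lagrangian with penalty parameter `c`. -/
def AugLag (f : X → ℝ) (h : X → Evec m1) (g : X → Evec m2) (c : ℝ)
    (x : X) (lam : Evec m1) (mu : Evec m2) : ℝ :=
  f x + ⟪lam, h x⟫ + (c / 2) * ‖h x‖ ^ 2 +
    (1 / (2 * c)) * (‖toE (fun i => max 0 (mu i + c * g x i))‖ ^ 2 - ‖mu‖ ^ 2)

/-- The inexact augmented Lagrangian method of Eckstein and Silva, with relative error
tolerance `σ ∈ [0,1)` and penalty parameters `c k` with `inf_k c k > 0`. -/
structure ALMSeq (f : X → ℝ) (h : X → Evec m1) (g : X → Evec m2)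
    (σ : ℝ) (c : ℕ → ℝ) (x y w : ℕ → X)
    (lam : ℕ → Evec m1) (mu : ℕ → Evec m2) : Prop where
  sigma_nonneg : 0 ≤ σ
  sigma_lt_one : σ < 1
  c_pos : ∀ k, 0 < c k
  c_inf : ∃ cmin > 0, ∀ k, cmin ≤ c k
  mu0_nonneg : ∀ i, 0 ≤ mu 0 i
  /-- `y k` is a subgradient at `x k` of `x ↦ L_{c_k}(x, λ^{k-1}, μ^{k-1})`. -/
  subgrad : ∀ k, 1 ≤ k → ∀ x' : X,
    AugLag f h g (c k) (x k) (lam (k - 1)) (mu (k - 1)) + ⟪y k, x' - x k⟫ ≤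
      AugLag f h g (c k) x' (lam (k - 1)) (mu (k - 1))
  /-- The relative error criterion. -/
  err : ∀ k, 1 ≤ k →
    (2 / c k) * |⟪w (k - 1) - x k, y k⟫| + ‖y k‖ ^ 2 ≤
      σ * (‖h (x k)‖ ^ 2 +
        ‖toE (fun i => min (mu (k - 1) i / c k) (-(g (x k) i)))‖ ^ 2)
  lam_update : ∀ k, 1 ≤ k → lam k = lam (k - 1) + c k • h (x k)
  mu_update : ∀ k, 1 ≤ k → mu k = toE (fun i => max 0 (mu (k - 1) i + c k * g (x k) i))
  w_update : ∀ k, 1 ≤ k → w k = w (k - 1) - c k • y k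

/-!
Each step of the method is an inexact proximal-point step on the saddle operator `∂L`: with
`u^k = (p^{k-1} - p^k)/c_k` one has `(y^k, u^k) ∈ ∂L(x^k, p^k)`. The dual half of this is the
variational inequality of the projection `max {0, ·}`. For the primal half,
`L_{c_k}(·, p^{k-1}) - L(·, p^k)` exceeds its value at `x^k` by at most
`(c_k/2)(‖h(·) - h(x^k)‖² + ‖g(·) - g(x^k)‖²)`, which is `O(‖· - x^k‖²)` because convex functions
are locally Lipschitz; so `y^k` gives a local quadratic minorant of the convex function
`L(·, p^k)` at `x^k`, hence a global affine one. Monotonicity of `∂L` against a saddle point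
`(x*, p*)`, together with the relative error criterion, then makes
`‖w^k - x*‖² + ‖p^k - p*‖²` nonincreasing.
-/

open Set Topology

lemma sq_max_zero_le (s t : ℝ) :
    max 0 s ^ 2 ≤ max 0 t ^ 2 + 2 * max 0 t * (s - t) + (s - t) ^ 2 := by
  rcases le_total s 0 with hs | hs <;> rcases le_total t 0 with ht | ht <;>
    simp only [max_eq_left, max_eq_right, hs, ht] <;> nlinarith

lemma sub_max_zero_mul_sub_max_zero_nonpos (s : ℝ) {t : ℝ} (ht : 0 ≤ t) :
    (s - max 0 s) * (t - max 0 s) ≤ 0 := by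
  rcases le_total s 0 with hs | hs
  · rw [max_eq_left hs]; nlinarith
  · rw [max_eq_right hs]; simp

lemma min_div_neg_eq {c : ℝ} (hc : 0 < c) (a b : ℝ) :
    min (a / c) (-b) = (a - max 0 (a + c * b)) / c := by
  rcases le_total (a + c * b) 0 with hab | hab
  · rw [max_eq_left hab, min_eq_left (by rw [div_le_iff₀ hc]; nlinarith), sub_zero]
  · rw [max_eq_right hab, min_eq_right (by rw [le_div_iff₀ hc]; nlinarith)]
    field_simp
    ring

lemma EuclideanSpace.real_inner_eq_sum {ι : Type*} [Fintype ι] (a b : EuclideanSpace ℝ ι) :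
    ⟪a, b⟫ = ∑ i, a i * b i := by
  simp [PiLp.inner_apply, mul_comm]

def muUpdate {m : ℕ} (c : ℝ) (mu v : Evec m) : Evec m := toE fun i => max 0 (mu i + c * v i)

@[simp]
lemma muUpdate_apply {m : ℕ} (c : ℝ) (mu v : Evec m) (i : Fin m) :
    muUpdate c mu v i = max 0 (mu i + c * v i) := rfl

lemma norm_muUpdate_sq_le {m : ℕ} (c : ℝ) (mu u v : Evec m) :
    ‖muUpdate c mu u‖ ^ 2 ≤
      ‖muUpdate c mu v‖ ^ 2 + 2 * c * ⟪muUpdate c mu v, u - v⟫ + c ^ 2 * ‖u - v‖ ^ 2 := by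
  simp only [EuclideanSpace.real_norm_sq_eq, EuclideanSpace.real_inner_eq_sum, Finset.mul_sum,
    ← Finset.sum_add_distrib]
  refine Finset.sum_le_sum fun i _ => ?_
  have := sq_max_zero_le (mu i + c * u i) (mu i + c * v i)
  simp only [muUpdate_apply, PiLp.sub_apply]
  nlinarith

lemma mkDual_add_smul (a a' : Evec m1) (b b' : Evec m2) (t : ℝ) :
    mkDual a b + t • mkDual a' b' = mkDual (a + t • a') (b + t • b') := rfl

section ConvexAnalysis

variable {E : Type*} [NormedAddCommGroup E] [InnerProductSpace ℝ E] {φ : E → ℝ}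

theorem ConvexOn.add_inner_le_of_eventually_sq (hφ : ConvexOn ℝ univ φ) {x₀ y : E} {C : ℝ}
    (hloc : ∀ᶠ x in 𝓝 x₀, φ x₀ + ⟪y, x - x₀⟫ - C * ‖x - x₀‖ ^ 2 ≤ φ x) (x : E) :
    φ x₀ + ⟪y, x - x₀⟫ ≤ φ x := by
  set d := x - x₀
  have hline : Tendsto (fun t : ℝ => x₀ + t • d) (𝓝[>] 0) (𝓝 x₀) := by
    have : Continuous fun t : ℝ => x₀ + t • d := by fun_prop
    simpa using (this.tendsto 0).mono_left nhdsWithin_le_nhds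
  have hslope : ∀ᶠ t in 𝓝[>] (0 : ℝ), ⟪y, d⟫ - C * ‖d‖ ^ 2 * t ≤ φ x - φ x₀ := by
    filter_upwards [hline.eventually hloc, Ioc_mem_nhdsGT one_pos] with t ht ⟨ht0, ht1⟩
    have hcvx : φ (x₀ + t • d) ≤ (1 - t) * φ x₀ + t * φ x := by
      have := hφ.2 (mem_univ x₀) (mem_univ x) (sub_nonneg.2 ht1) ht0.le (by ring)
      rwa [show (1 - t) • x₀ + t • x = x₀ + t • d by
        simp only [d, smul_sub, sub_smul, one_smul]; abel] at this
    rw [add_sub_cancel_left, inner_smul_right, norm_smul, Real.norm_of_nonneg ht0.le] at ht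
    have : t * (⟪y, d⟫ - C * ‖d‖ ^ 2 * t) ≤ t * (φ x - φ x₀) := by nlinarith
    exact le_of_mul_le_mul_left this ht0
  have hlim : Tendsto (fun t : ℝ => ⟪y, d⟫ - C * ‖d‖ ^ 2 * t) (𝓝[>] 0) (𝓝 ⟪y, d⟫) := by
    have : Continuous fun t : ℝ => ⟪y, d⟫ - C * ‖d‖ ^ 2 * t := by fun_prop
    simpa using (this.tendsto 0).mono_left nhdsWithin_le_nhds
  linarith [le_of_tendsto hlim hslope]

variable [FiniteDimensional ℝ E]

theorem ConvexOn.exists_eventually_sq_sub_le (hφ : ConvexOn ℝ univ φ) (x₀ : E) :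
    ∃ K : ℝ, ∀ᶠ x in 𝓝 x₀, (φ x - φ x₀) ^ 2 ≤ K * ‖x - x₀‖ ^ 2 := by
  obtain ⟨K, t, ht, hK⟩ := hφ.locallyLipschitz x₀
  refine ⟨K ^ 2, ?_⟩
  filter_upwards [ht] with x hx
  have := hK.dist_le_mul x hx x₀ (mem_of_mem_nhds ht)
  rw [Real.dist_eq, dist_eq_norm] at this
  rw [← sq_abs, ← mul_pow]
  exact pow_le_pow_left₀ (abs_nonneg _) this 2

theorem exists_eventually_norm_sub_sq_le {m : ℕ} {F : E → Evec m}
    (hF : ∀ i, ConvexOn ℝ univ fun z => F z i) (x₀ : E) :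
    ∃ K : ℝ, ∀ᶠ x in 𝓝 x₀, ‖F x - F x₀‖ ^ 2 ≤ K * ‖x - x₀‖ ^ 2 := by
  choose K hK using fun i => (hF i).exists_eventually_sq_sub_le x₀
  refine ⟨∑ i, K i, ?_⟩
  filter_upwards [eventually_all.2 hK] with x hx
  rw [EuclideanSpace.real_norm_sq_eq, Finset.sum_mul]
  exact Finset.sum_le_sum fun i _ => hx i

end ConvexAnalysis

section Lagrangian

variable {α : Type*} {f : α → ℝ} {h : α → Evec m1} {g : α → Evec m2}

lemma augLag_eq (c : ℝ) (x : α) (lam : Evec m1) (mu : Evec m2) :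
    AugLag f h g c x lam mu = f x + ⟪lam, h x⟫ + c / 2 * ‖h x‖ ^ 2 +
      1 / (2 * c) * (‖muUpdate c mu (g x)‖ ^ 2 - ‖mu‖ ^ 2) := rfl

theorem augLag_sub_lag_le {c : ℝ} (hc : 0 < c) (lam : Evec m1) (mu : Evec m2) (x₀ x : α) :
    AugLag f h g c x lam mu - Lag f h g x (lam + c • h x₀) (muUpdate c mu (g x₀)) ≤
      AugLag f h g c x₀ lam mu - Lag f h g x₀ (lam + c • h x₀) (muUpdate c mu (g x₀)) +
        c / 2 * (‖h x - h x₀‖ ^ 2 + ‖g x - g x₀‖ ^ 2) := by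
  have hmu : 1 / (2 * c) * (‖muUpdate c mu (g x)‖ ^ 2 - ‖muUpdate c mu (g x₀)‖ ^ 2) ≤
      ⟪muUpdate c mu (g x₀), g x⟫ - ⟪muUpdate c mu (g x₀), g x₀⟫ + c / 2 * ‖g x - g x₀‖ ^ 2 := by
    have := norm_muUpdate_sq_le c mu (g x) (g x₀)
    rw [inner_sub_right] at this
    rw [div_mul_eq_mul_div, one_mul, div_le_iff₀ (by positivity)]
    nlinarith
  have hh : ‖h x‖ ^ 2 = 2 * ⟪h x₀, h x⟫ - ‖h x₀‖ ^ 2 + ‖h x - h x₀‖ ^ 2 := by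
    rw [← sub_eq_zero, norm_sub_sq_real, real_inner_comm]
    ring
  have hlam : ∀ z, ⟪lam + c • h x₀, h z⟫ = ⟪lam, h z⟫ + c * ⟪h x₀, h z⟫ := fun z => by
    rw [inner_add_left, real_inner_smul_left]
  rw [augLag_eq, augLag_eq]
  simp only [Lag, hlam, real_inner_self_eq_norm_sq, hh]
  linarith

theorem lag_le_of_muUpdate {c : ℝ} (hc : 0 < c) (lam : Evec m1) (mu : Evec m2) (x₀ : α)
    {lam' : Evec m1} {mu' : Evec m2} (hmu' : ∀ i, 0 ≤ mu' i) :
    Lag f h g x₀ lam' mu' ≤ Lag f h g x₀ (lam + c • h x₀) (muUpdate c mu (g x₀)) -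
      ⟪-h x₀, lam' - (lam + c • h x₀)⟫ -
      ⟪c⁻¹ • (mu - muUpdate c mu (g x₀)), mu' - muUpdate c mu (g x₀)⟫ := by
  set μ := muUpdate c mu (g x₀)
  have hproj : ⟪mu + c • g x₀ - μ, mu' - μ⟫ ≤ 0 := by
    rw [EuclideanSpace.real_inner_eq_sum]
    exact Finset.sum_nonpos fun i _ =>
      sub_max_zero_mul_sub_max_zero_nonpos (mu i + c * g x₀ i) (hmu' i)
  have hsplit : ⟪mu + c • g x₀ - μ, mu' - μ⟫ =
      c * ⟪c⁻¹ • (mu - μ), mu' - μ⟫ + c * ⟪g x₀, mu' - μ⟫ := by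
    rw [add_sub_right_comm, inner_add_left, real_inner_smul_left, real_inner_smul_left,
      mul_inv_cancel_left₀ hc.ne']
  have hmu : ⟪mu', g x₀⟫ ≤ ⟪μ, g x₀⟫ - ⟪c⁻¹ • (mu - μ), mu' - μ⟫ := by
    rw [inner_sub_right (g x₀), real_inner_comm mu' (g x₀), real_inner_comm μ (g x₀)] at hsplit
    nlinarith
  have hlam : ⟪lam', h x₀⟫ = ⟪lam + c • h x₀, h x₀⟫ - ⟪-h x₀, lam' - (lam + c • h x₀)⟫ := by
    rw [inner_neg_left, inner_sub_right, real_inner_comm lam', real_inner_comm (lam + c • h x₀)]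
    ring
  simp only [Lag]
  linarith

end Lagrangian

section InnerProductSpace

variable {E : Type*} [NormedAddCommGroup E] [InnerProductSpace ℝ E]
  {f : E → ℝ} {h : E → Evec m1} {g : E → Evec m2}

theorem AffineMap.convexOn_apply {m : ℕ} (A : E →ᵃ[ℝ] Evec m) (i : Fin m) :
    ConvexOn ℝ univ fun z => A z i :=
  ((EuclideanSpace.proj i : Evec m →L[ℝ] ℝ).toLinearMap.convexOn convex_univ).comp_affineMap A

theorem convexOn_lag (hf : ConvexOn ℝ univ f) (A : E →ᵃ[ℝ] Evec m1)
    (hg : ∀ i, ConvexOn ℝ univ fun z => g z i) (lam : Evec m1) {mu : Evec m2}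
    (hmu : ∀ i, 0 ≤ mu i) :
    ConvexOn ℝ univ fun z => Lag f A g z lam mu := by
  have hA : ConvexOn ℝ univ fun z => ⟪lam, A z⟫ :=
    ((innerSL ℝ lam).toLinearMap.convexOn convex_univ).comp_affineMap A
  have hmug : ConvexOn ℝ univ fun z => ⟪mu, g z⟫ := by
    simp_rw [EuclideanSpace.real_inner_eq_sum]
    have := Finset.univ.sum_induction (fun i z => mu i * g z i) (ConvexOn ℝ univ)
      (fun _ _ => ConvexOn.add) (convexOn_const 0 convex_univ) fun i _ => (hg i).smul (hmu i)
    rwa [Finset.sum_fn] at this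
  exact (hf.add hA).add hmug

theorem saddleSubdiff_monotone {x x' y y' : E} {lam lam' u u' : Evec m1} {mu mu' v v' : Evec m2}
    (hs : saddleSubdiff f h g x lam mu y u v) (hmu : ∀ i, 0 ≤ mu i)
    (hs' : saddleSubdiff f h g x' lam' mu' y' u' v') (hmu' : ∀ i, 0 ≤ mu' i) :
    0 ≤ ⟪y - y', x - x'⟫ + ⟪u - u', lam - lam'⟫ + ⟪v - v', mu - mu'⟫ := by
  have := hs.1 x'
  have := hs'.1 x
  have := hs.2 lam' mu' hmu'
  have := hs'.2 lam mu hmu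
  simp only [inner_sub_left, inner_sub_right] at *
  linarith

theorem norm_sub_sq_add_norm_sub_sq_le_of_relative_error {F : Type*} [NormedAddCommGroup F]
    [InnerProductSpace ℝ F] {c σ : ℝ} (hc : 0 < c) (hσ : σ ≤ 1) {w x x₀ y : E} {p p₀ u : F}
    (hmono : 0 ≤ ⟪y, x - x₀⟫ + ⟪u, p - p₀⟫)
    (herr : 2 / c * |⟪w - x, y⟫| + ‖y‖ ^ 2 ≤ σ * ‖u‖ ^ 2) :
    ‖w - c • y - x₀‖ ^ 2 + ‖p - p₀‖ ^ 2 ≤ ‖w - x₀‖ ^ 2 + ‖p + c • u - p₀‖ ^ 2 := by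
  have hw : ‖w - c • y - x₀‖ ^ 2 =
      ‖w - x₀‖ ^ 2 - 2 * c * (⟪y, x - x₀⟫ + ⟪w - x, y⟫) + c ^ 2 * ‖y‖ ^ 2 := by
    rw [sub_right_comm, norm_sub_sq_real, inner_smul_right, norm_smul, mul_pow,
      Real.norm_of_nonneg hc.le, real_inner_comm y, real_inner_comm y (w - x), ← inner_add_right,
      sub_add_sub_cancel']
    ring
  have hp : ‖p + c • u - p₀‖ ^ 2 = ‖p - p₀‖ ^ 2 + 2 * c * ⟪u, p - p₀⟫ + c ^ 2 * ‖u‖ ^ 2 := by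
    rw [add_sub_right_comm, norm_add_sq_real, inner_smul_right, norm_smul, mul_pow,
      Real.norm_of_nonneg hc.le, real_inner_comm u]
    ring
  have herr' : 2 * c * |⟪w - x, y⟫| + c ^ 2 * ‖y‖ ^ 2 ≤ σ * c ^ 2 * ‖u‖ ^ 2 := by
    have := mul_le_mul_of_nonneg_left herr (sq_nonneg c)
    have e : c ^ 2 * (2 / c * |⟪w - x, y⟫| + ‖y‖ ^ 2) =
        2 * c * |⟪w - x, y⟫| + c ^ 2 * ‖y‖ ^ 2 := by
      field_simp
    linarith
  have hσu : σ * c ^ 2 * ‖u‖ ^ 2 ≤ c ^ 2 * ‖u‖ ^ 2 := by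
    have := mul_le_mul_of_nonneg_right hσ (by positivity : 0 ≤ c ^ 2 * ‖u‖ ^ 2)
    linarith
  have habs : -(2 * c * ⟪w - x, y⟫) ≤ 2 * c * |⟪w - x, y⟫| := by
    rw [← mul_neg]
    exact mul_le_mul_of_nonneg_left (neg_le_abs _) (by positivity)
  have hmono' : 0 ≤ 2 * c * (⟪y, x - x₀⟫ + ⟪u, p - p₀⟫) := mul_nonneg (by positivity) hmono
  rw [hw, hp]
  linarith

end InnerProductSpace

section AugmentedLagrangianStep

variable {f : X → ℝ} {g : X → Evec m2}

theorem lag_subgradient_of_augLag_subgradient (hf : ConvexOn ℝ univ f) (A : X →ᵃ[ℝ] Evec m1)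
    (hg : ∀ i, ConvexOn ℝ univ fun z => g z i) {c : ℝ} (hc : 0 < c) {lam : Evec m1}
    {mu : Evec m2} {x₀ y : X}
    (hsub : ∀ x, AugLag f A g c x₀ lam mu + ⟪y, x - x₀⟫ ≤ AugLag f A g c x lam mu) (x : X) :
    Lag f A g x₀ (lam + c • A x₀) (muUpdate c mu (g x₀)) + ⟪y, x - x₀⟫ ≤
      Lag f A g x (lam + c • A x₀) (muUpdate c mu (g x₀)) := by
  obtain ⟨KA, hKA⟩ := exists_eventually_norm_sub_sq_le A.convexOn_apply x₀
  obtain ⟨Kg, hKg⟩ := exists_eventually_norm_sub_sq_le hg x₀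
  refine (convexOn_lag hf A hg _ fun i => le_max_left _ _).add_inner_le_of_eventually_sq
    (C := c / 2 * (KA + Kg)) ?_ x
  filter_upwards [hKA, hKg] with x hxA hxg
  have hrem : c / 2 * (‖A x - A x₀‖ ^ 2 + ‖g x - g x₀‖ ^ 2) ≤
      c / 2 * (KA + Kg) * ‖x - x₀‖ ^ 2 := by
    rw [mul_assoc, add_mul]
    exact mul_le_mul_of_nonneg_left (add_le_add hxA hxg) (by positivity)
  linarith [hsub x, augLag_sub_lag_le (f := f) (h := A) (g := g) hc lam mu x₀ x]

/-- `(-A x₀, c⁻¹ • (mu - muUpdate c mu (g x₀)))` is `(p_prev - p_next) / c`, the dual half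
`u^k` of the paper's element `(y^k, u^k)` of `∂L(x^k, p^k)`. -/
theorem saddleSubdiff_of_augLag_subgradient (hf : ConvexOn ℝ univ f) (A : X →ᵃ[ℝ] Evec m1)
    (hg : ∀ i, ConvexOn ℝ univ fun z => g z i) {c : ℝ} (hc : 0 < c) {lam : Evec m1}
    {mu : Evec m2} {x₀ y : X}
    (hsub : ∀ x, AugLag f A g c x₀ lam mu + ⟪y, x - x₀⟫ ≤ AugLag f A g c x lam mu) :
    saddleSubdiff f A g x₀ (lam + c • A x₀) (muUpdate c mu (g x₀)) y (-A x₀)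
      (c⁻¹ • (mu - muUpdate c mu (g x₀))) :=
  ⟨lag_subgradient_of_augLag_subgradient hf A hg hc hsub,
    fun _ _ hmu' => lag_le_of_muUpdate hc lam mu x₀ hmu'⟩

end AugmentedLagrangianStep

namespace ALMSeq

section

variable {E : Type*} [NormedAddCommGroup E] [InnerProductSpace ℝ E]
  {f : E → ℝ} {h : E → Evec m1} {g : E → Evec m2} {σ : ℝ} {c : ℕ → ℝ} {x y w : ℕ → E}
  {lam : ℕ → Evec m1} {mu : ℕ → Evec m2}

theorem lam_succ (halg : ALMSeq f h g σ c x y w lam mu) (k : ℕ) :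
    lam (k + 1) = lam k + c (k + 1) • h (x (k + 1)) :=
  halg.lam_update (k + 1) k.succ_pos

theorem mu_succ (halg : ALMSeq f h g σ c x y w lam mu) (k : ℕ) :
    mu (k + 1) = muUpdate (c (k + 1)) (mu k) (g (x (k + 1))) :=
  halg.mu_update (k + 1) k.succ_pos

theorem mu_nonneg (halg : ALMSeq f h g σ c x y w lam mu) : ∀ k i, 0 ≤ mu k i
  | 0 => halg.mu0_nonneg
  | k + 1 => fun _ => by rw [halg.mu_succ k]; exact le_max_left _ _

theorem err_succ (halg : ALMSeq f h g σ c x y w lam mu) (k : ℕ) :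
    2 / c (k + 1) * |⟪w k - x (k + 1), y (k + 1)⟫| + ‖y (k + 1)‖ ^ 2 ≤
      σ * ‖mkDual (-h (x (k + 1))) ((c (k + 1))⁻¹ • (mu k - mu (k + 1)))‖ ^ 2 := by
  have hmin : toE (fun i => min (mu k i / c (k + 1)) (-g (x (k + 1)) i)) =
      (c (k + 1))⁻¹ • (mu k - mu (k + 1)) := by
    ext i
    rw [halg.mu_succ k]
    simp only [toE, PiLp.toLp_apply, PiLp.smul_apply, PiLp.sub_apply, muUpdate_apply,
      smul_eq_mul]
    rw [min_div_neg_eq (halg.c_pos (k + 1)), div_eq_inv_mul]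
  rw [mkDual, WithLp.prod_norm_sq_eq_of_L2]
  simpa [hmin] using halg.err (k + 1) k.succ_pos

end

variable {f : X → ℝ} {A : X →ᵃ[ℝ] Evec m1} {g : X → Evec m2} {σ : ℝ} {c : ℕ → ℝ}
  {x y w : ℕ → X} {lam : ℕ → Evec m1} {mu : ℕ → Evec m2}

theorem saddleSubdiff_succ (halg : ALMSeq f A g σ c x y w lam mu) (hf : ConvexOn ℝ univ f)
    (hg : ∀ i, ConvexOn ℝ univ fun z => g z i) (k : ℕ) :
    saddleSubdiff f A g (x (k + 1)) (lam (k + 1)) (mu (k + 1)) (y (k + 1)) (-A (x (k + 1)))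
      ((c (k + 1))⁻¹ • (mu k - mu (k + 1))) := by
  rw [halg.lam_succ k, halg.mu_succ k]
  exact saddleSubdiff_of_augLag_subgradient hf A hg (halg.c_pos (k + 1))
    (halg.subgrad (k + 1) k.succ_pos)

theorem fejer_succ (halg : ALMSeq f A g σ c x y w lam mu) (hf : ConvexOn ℝ univ f)
    (hg : ∀ i, ConvexOn ℝ univ fun z => g z i) {xs : X} {ls : Evec m1} {ms : Evec m2}
    (hms : ∀ i, 0 ≤ ms i) (hsad : saddleSubdiff f A g xs ls ms 0 0 0) (k : ℕ) :
    ‖w (k + 1) - xs‖ ^ 2 + ‖mkDual (lam (k + 1)) (mu (k + 1)) - mkDual ls ms‖ ^ 2 ≤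
      ‖w k - xs‖ ^ 2 + ‖mkDual (lam k) (mu k) - mkDual ls ms‖ ^ 2 := by
  have hc := halg.c_pos (k + 1)
  have hmono := saddleSubdiff_monotone (halg.saddleSubdiff_succ hf hg k) (halg.mu_nonneg _)
    hsad hms
  have hp : mkDual (lam k) (mu k) = mkDual (lam (k + 1)) (mu (k + 1)) +
      c (k + 1) • mkDual (-A (x (k + 1))) ((c (k + 1))⁻¹ • (mu k - mu (k + 1))) := by
    rw [mkDual_add_smul, smul_inv_smul₀ hc.ne', halg.lam_succ k, smul_neg, add_neg_cancel_right,
      add_sub_cancel]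
  rw [halg.w_update (k + 1) k.succ_pos, hp]
  refine norm_sub_sq_add_norm_sub_sq_le_of_relative_error hc halg.sigma_lt_one.le ?_
    (halg.err_succ k)
  simpa [mkDual, add_assoc] using hmono

end ALMSeq

theorem exists_norm_le_of_norm_sub_sq_add_le {E F : Type*} [SeminormedAddCommGroup E]
    [SeminormedAddCommGroup F] {a : ℕ → E} {b : ℕ → F} {a₀ : E} {b₀ : F} {V : ℝ}
    (hV : ∀ k, ‖a k - a₀‖ ^ 2 + ‖b k - b₀‖ ^ 2 ≤ V) :
    ∃ M : ℝ, (∀ k, ‖b k‖ ≤ M) ∧ ∀ k, ‖a k‖ ≤ M := by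
  refine ⟨√V + ‖a₀‖ + ‖b₀‖, fun k => ?_, fun k => ?_⟩
  · have : ‖b k - b₀‖ ≤ √V := Real.le_sqrt_of_sq_le (by nlinarith [hV k, sq_nonneg ‖a k - a₀‖])
    linarith [norm_le_norm_add_norm_sub' (b k) b₀, norm_nonneg a₀]
  · have : ‖a k - a₀‖ ≤ √V := Real.le_sqrt_of_sq_le (by nlinarith [hV k, sq_nonneg ‖b k - b₀‖])
    linarith [norm_le_norm_add_norm_sub' (a k) a₀, norm_nonneg b₀]

theorem eckstein_silva_alm_dual_and_aux_sequences_bounded_general {f : X → ℝ} {h : X → Evec m1} {g : X → Evec m2}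
    (hf : ConvexOn ℝ Set.univ f)
    (hh : ∃ A : X →ᵃ[ℝ] Evec m1, ∀ z, h z = A z)
    (hg1 : ∀ i, ConvexOn ℝ Set.univ (fun z => g z i))
    {σ : ℝ} {c : ℕ → ℝ} {x y w : ℕ → X} {lam : ℕ → Evec m1} {mu : ℕ → Evec m2}
    (halg : ALMSeq f h g σ c x y w lam mu)
    (hsad : (SaddlePoints f h g).Nonempty)
 :
    ∃ M : ℝ, (∀ k, ‖mkDual (lam k) (mu k)‖ ≤ M) ∧ (∀ k, ‖w k‖ ≤ M) := by
  obtain ⟨A, hA⟩ := hh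
  obtain rfl : h = A := funext hA
  obtain ⟨_, xs, ls, ms, -, hms, hsaddle⟩ := hsad
  have hV : Antitone fun k => ‖w k - xs‖ ^ 2 + ‖mkDual (lam k) (mu k) - mkDual ls ms‖ ^ 2 :=
    antitone_nat_of_succ_le (halg.fejer_succ hf hg1 hms hsaddle)
  exact exists_norm_le_of_norm_sub_sq_add_le (b := fun k => mkDual (lam k) (mu k))
    fun k => hV k.zero_le

theorem eckstein_silva_alm_dual_and_aux_sequences_bounded {f : X → ℝ} {h : X → Evec m1} {g : X → Evec m2}
    (hf : ConvexOn ℝ Set.univ f)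
    (hh : ∃ A : X →ᵃ[ℝ] Evec m1, ∀ z, h z = A z)
    (hg1 : ∀ i, ConvexOn ℝ Set.univ (fun z => g z i))
    (hg2 : ∀ i, ContDiff ℝ 1 (fun z => g z i))
    {σ : ℝ} {c : ℕ → ℝ} {x y w : ℕ → X} {lam : ℕ → Evec m1} {mu : ℕ → Evec m2}
    (halg : ALMSeq f h g σ c x y w lam mu)
    (hsad : (SaddlePoints f h g).Nonempty)
 :
    ∃ M : ℝ, (∀ k, ‖mkDual (lam k) (mu k)‖ ≤ M) ∧ (∀ k, ‖w k‖ ≤ M) :=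
  eckstein_silva_alm_dual_and_aux_sequences_bounded_general hf hh hg1 halg hsad
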